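/- arXiv:2006.05564 — 2 statements merged into one kernel-verified Lean document; each statement's English description precedes it below -/
import Mathlib

section
/- Subsequence filtering principle: Let P' and Q be strings over Σ, and let Q' be a subsequence of Q. For each symbol q define B(q) = {b ∈ Σ : sub(q,b) ≤ η} (with q ∈ B(q) since sub(q,q)=0) and c(q) = min over q' ∈ Σ_ε \ B(q) of sub(q,q'). If no symbol of P' lies in B(Q') := ∪_{q ∈ Q'} B(q), and Σ_{q ∈ Q'} c(q) ≥ τ, then wed(P', Q) ≥ τ. -/
/-- Weighted edit distance over strings on alphabet `α`, with `none` playing the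
role of the empty symbol `ε`; `sub a b` is the cost of substituting `a` by `b`,
`sub none (some b)` the insertion cost and `sub (some a) none` the deletion cost. -/
noncomputable def wed {α : Type*} (sub : Option α → Option α → ℝ) : List α → List α → ℝ
  | [], Q => (Q.map (fun q => sub none (some q))).sum
  | p :: P, [] => sub (some p) none + wed sub P []
  | p :: P, q :: Q =>
      min (min (wed sub P Q + sub (some p) (some q))
               (wed sub P (q :: Q) + sub (some p) none))
          (wed sub (p :: P) Q + sub none (some q))
termination_by P Q => P.length + Q.length
decreasing_by all_goals (simp [List.length]; try omega)

open scoped Classical in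
/-- Substitution neighborhood `B(q) = {b ∈ Σ : sub(q,b) ≤ η}`. -/
noncomputable def subNbhd {α : Type*} [Fintype α] (sub : Option α → Option α → ℝ)
    (η : ℝ) (q : α) : Finset α :=
  Finset.univ.filter (fun b => sub (some q) (some b) ≤ η)

open scoped Classical in
/-- The cost `c(q) = min_{q' ∈ Σ_ε \ B(q)} sub(q,q')`.  The minimum is over a
nonempty finite set since `ε` (i.e. `none`) is never in `B(q)`. -/
noncomputable def subCost {α : Type*} [Fintype α] (sub : Option α → Option α → ℝ)
    (η : ℝ) (q : α) : ℝ :=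
  Finset.inf'
    (Finset.univ.filter (fun x : Option α => x ∉ (subNbhd sub η q).image some))
    ⟨none, by simp⟩ (fun x => sub (some q) x)

/-! Every symbol `q` of `Q'` has to be paid for in an alignment of `P'` with `Q`: it is either
inserted, at cost `sub(ε, q) ≥ c(q)`, or substituted by a symbol of `P'`, which lies outside
`B(q)` and so costs at least `c(q)`. Distinct symbols of `Q'` are charged to distinct edit
operations, so `wed(P', Q) ≥ ∑_{q ∈ Q'} c(q)`. -/

theorem sum_map_le_wed_of_sublist {α : Type*} (sub : Option α → Option α → ℝ)
    (hnn : ∀ a b : Option α, 0 ≤ sub a b) (c : α → ℝ)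
    (hins : ∀ q, c q ≤ sub none (some q)) :
    ∀ P Q Q' : List α, Q'.Sublist Q →
      (∀ p ∈ P, ∀ q ∈ Q', c q ≤ sub (some p) (some q)) → (Q'.map c).sum ≤ wed sub P Q
  | [], Q, Q', hQ', _ => by
    rw [wed]
    calc (Q'.map c).sum ≤ (Q'.map fun q => sub none (some q)).sum :=
          List.sum_le_sum fun q _ => hins q
      _ ≤ (Q.map fun q => sub none (some q)).sum :=
          (hQ'.map _).sum_le_sum fun _ hx => by
            obtain ⟨q, -, rfl⟩ := List.mem_map.mp hx
            exact hnn _ _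
  | p :: P, [], Q', hQ', _ => by
    obtain rfl := List.sublist_nil.mp hQ'
    rw [wed]
    exact add_nonneg (hnn _ _) (sum_map_le_wed_of_sublist sub hnn c hins P [] [] .slnil (by simp))
  | p :: P, q :: Q, Q', hQ', hsubst => by
    have hsubst_tail : ∀ p' ∈ P, ∀ q' ∈ Q', c q' ≤ sub (some p') (some q') :=
      fun p' hp' => hsubst p' (List.mem_cons_of_mem _ hp')
    rw [wed]
    rcases List.sublist_cons_iff.mp hQ' with hskip | ⟨Q'', rfl, hQ''⟩
    · refine le_min (le_min ?_ ?_) ?_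
      · exact le_add_of_le_of_nonneg
          (sum_map_le_wed_of_sublist sub hnn c hins P Q Q' hskip hsubst_tail) (hnn _ _)
      · exact le_add_of_le_of_nonneg
          (sum_map_le_wed_of_sublist sub hnn c hins P (q :: Q) Q' hQ' hsubst_tail) (hnn _ _)
      · exact le_add_of_le_of_nonneg
          (sum_map_le_wed_of_sublist sub hnn c hins (p :: P) Q Q' hskip hsubst) (hnn _ _)
    · have hsubst' : ∀ p' ∈ p :: P, ∀ q' ∈ Q'', c q' ≤ sub (some p') (some q') :=
        fun p' hp' q' hq' => hsubst p' hp' q' (List.mem_cons_of_mem _ hq')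
      rw [List.map_cons, List.sum_cons]
      refine le_min (le_min ?_ ?_) ?_
      · rw [add_comm]
        exact add_le_add
          (sum_map_le_wed_of_sublist sub hnn c hins P Q Q'' hQ''
            fun p' hp' => hsubst' p' (List.mem_cons_of_mem _ hp'))
          (hsubst p List.mem_cons_self q List.mem_cons_self)
      · have h := sum_map_le_wed_of_sublist sub hnn c hins P (q :: Q) (q :: Q'') hQ' hsubst_tail
        rw [List.map_cons, List.sum_cons] at h
        exact le_add_of_le_of_nonneg h (hnn _ _)
      · rw [add_comm]
        exact add_le_add (sum_map_le_wed_of_sublist sub hnn c hins (p :: P) Q Q'' hQ'' hsubst')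
          (hins q)
  termination_by P Q => P.length + Q.length

section subCost

variable {α : Type*} [Fintype α] (sub : Option α → Option α → ℝ) (η : ℝ)

open scoped Classical in
theorem subCost_le {q : α} {x : Option α} (hx : x ∉ (subNbhd sub η q).image some) :
    subCost sub η q ≤ sub (some q) x :=
  Finset.inf'_le _ (by simpa using hx)

theorem subCost_le_sub_none (q : α) : subCost sub η q ≤ sub (some q) none :=
  subCost_le sub η (by simp)

theorem subCost_le_of_notMem_subNbhd {q p : α} (hp : p ∉ subNbhd sub η q) :
    subCost sub η q ≤ sub (some q) (some p) :=
  subCost_le sub η (by simpa using hp)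

end subCost

theorem subsequence_filtering_general {α : Type*} [Fintype α]
    (sub : Option α → Option α → ℝ)
    (hnn : ∀ a b : Option α, 0 ≤ sub a b)
    (hsym : ∀ a b : Option α, sub a b = sub b a)
    (η : ℝ) (τ : ℝ)
    (P' Q Q' : List α) (hQ' : Q'.Sublist Q)
    (hdisj : ∀ p ∈ P', ∀ q ∈ Q', p ∉ subNbhd sub η q)
    (hcost : τ ≤ (Q'.map (subCost sub η)).sum) :
    τ ≤ wed sub P' Q := by
  have hins : ∀ q, subCost sub η q ≤ sub none (some q) := fun q => by
    rw [hsym]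
    exact subCost_le_sub_none sub η q
  have hsubst : ∀ p ∈ P', ∀ q ∈ Q', subCost sub η q ≤ sub (some p) (some q) :=
    fun p hp q hq => by
      rw [hsym]
      exact subCost_le_of_notMem_subNbhd sub η (hdisj p hp q hq)
  exact hcost.trans (sum_map_le_wed_of_sublist sub hnn _ hins P' Q Q' hQ' hsubst)

/-- Subsequence filtering principle: if `Q'` is a subsequence of the
query `Q` with total cost `∑_{q ∈ Q'} c(q) ≥ τ`, and no symbol of `P'` lies in
`B(Q') = ⋃_{q ∈ Q'} B(q)`, then `wed(P',Q) ≥ τ`. -/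
theorem subsequence_filtering {α : Type*} [Fintype α]
    (sub : Option α → Option α → ℝ)
    (hnn : ∀ a b : Option α, 0 ≤ sub a b)
    (hsym : ∀ a b : Option α, sub a b = sub b a)
    (hzero : ∀ a : Option α, sub a a = 0)
    (η : ℝ) (hη : 0 ≤ η) (τ : ℝ) (hτ : 0 < τ)
    (P' Q Q' : List α) (hQ' : Q'.Sublist Q)
    (hdisj : ∀ p ∈ P', ∀ q ∈ Q', p ∉ subNbhd sub η q)
    (hcost : τ ≤ (Q'.map (subCost sub η)).sum) :
    τ ≤ wed sub P' Q :=
  subsequence_filtering_general sub hnn hsym η τ P' Q Q' hQ' hdisj hcost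
end

section
/- The prefix lower bounds are monotone nondecreasing: for 0 ≤ k ≤ k' ≤ |P|, LB_k ≤ LB_{k'}, where LB_k = min_{0 ≤ j ≤ |Q|} wed(P_{1:k}, Q_{1:j}), provided all deletion costs are nonnegative. -/
/-! The last symbol `x` of `P ++ [x]` is either deleted or aligned with some symbol of `Q`;
in both cases dropping it, together with everything of `Q` from that symbol on, leaves an
alignment of `P` with a prefix of `Q` that costs no more, since all costs are nonnegative.
Hence `min_j wed(P, Q_{1:j}) ≤ wed(P ++ [x], Q)`, and taking minima over prefixes of `Q`
gives `LB_k ≤ LB_{k+1}`. -/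

lemma exists_le_min {β : Type*} [LinearOrder β] {f : ℕ → β} {n : ℕ} {a b : β}
    (ha : ∃ j ≤ n, f j ≤ a) (hb : ∃ j ≤ n, f j ≤ b) : ∃ j ≤ n, f j ≤ min a b := by
  rcases min_choice a b with h | h <;> rw [h] <;> assumption

section

variable {α : Type*} (sub : Option α → Option α → ℝ)

/-- The paper's `LB_k`, for `P = P_{1:k}`. -/
noncomputable def wedPrefixMin (P Q : List α) : ℝ :=
  (Finset.range (Q.length + 1)).inf' ⟨0, by simp⟩ (fun j => wed sub P (Q.take j))

lemma wed_nonneg (hnn : ∀ a b, 0 ≤ sub a b) (P Q : List α) : 0 ≤ wed sub P Q := by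
  induction P, Q using wed.induct with
  | case1 Q => rw [wed]; exact List.sum_nonneg (by simp [hnn])
  | case2 p P ih => rw [wed]; exact add_nonneg (hnn _ _) ih
  | case3 p P q Q ih₁ ih₂ ih₃ =>
      rw [wed]
      exact le_min (le_min (add_nonneg ih₁ (hnn _ _)) (add_nonneg ih₂ (hnn _ _)))
        (add_nonneg ih₃ (hnn _ _))

lemma wed_cons_le_wed_add_del (p : α) (P Q : List α) :
    wed sub (p :: P) Q ≤ wed sub P Q + sub (some p) none := by
  cases Q with
  | nil => rw [wed, add_comm]
  | cons q Q => rw [wed]; exact (min_le_left _ _).trans (min_le_right _ _)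

lemma wed_cons_cons_le_wed_add_sub (p q : α) (P Q : List α) :
    wed sub (p :: P) (q :: Q) ≤ wed sub P Q + sub (some p) (some q) := by
  rw [wed]; exact (min_le_left _ _).trans (min_le_left _ _)

lemma wed_cons_cons_le_wed_add_ins (p q : α) (P Q : List α) :
    wed sub (p :: P) (q :: Q) ≤ wed sub (p :: P) Q + sub none (some q) := by
  rw [wed]; exact min_le_right _ _

lemma exists_wed_take_le_wed_append_singleton (hnn : ∀ a b, 0 ≤ sub a b) (x : α)
    (P Q : List α) : ∃ j ≤ Q.length, wed sub P (Q.take j) ≤ wed sub (P ++ [x]) Q := by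
  induction P, Q using wed.induct with
  | case1 Q =>
      refine ⟨0, Nat.zero_le _, ?_⟩
      simpa [wed] using wed_nonneg sub hnn [x] Q
  | case2 p P ih =>
      obtain ⟨j, -, hj⟩ := ih
      refine ⟨0, le_rfl, ?_⟩
      simp only [List.take_nil, List.cons_append] at hj ⊢
      rw [wed, wed]
      linarith
  | case3 p P q Q ih_sub ih_del ih_ins =>
      rw [List.cons_append, wed]
      simp only [List.length_cons, List.cons_append] at ih_sub ih_del ih_ins ⊢
      refine exists_le_min (exists_le_min ?_ ?_) ?_
      · obtain ⟨j, hjQ, hj⟩ := ih_sub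
        refine ⟨j + 1, by omega, ?_⟩
        rw [List.take_succ_cons]
        linarith [wed_cons_cons_le_wed_add_sub sub p q P (Q.take j)]
      · obtain ⟨j, hjQ, hj⟩ := ih_del
        exact ⟨j, hjQ, by linarith [wed_cons_le_wed_add_del sub p P ((q :: Q).take j)]⟩
      · obtain ⟨j, hjQ, hj⟩ := ih_ins
        refine ⟨j + 1, by omega, ?_⟩
        rw [List.take_succ_cons]
        linarith [wed_cons_cons_le_wed_add_ins sub p q P (Q.take j)]

lemma wedPrefixMin_le_wed_append_singleton (hnn : ∀ a b, 0 ≤ sub a b) (x : α)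
    (P Q : List α) (j : ℕ) : wedPrefixMin sub P Q ≤ wed sub (P ++ [x]) (Q.take j) := by
  obtain ⟨i, hi, hle⟩ := exists_wed_take_le_wed_append_singleton sub hnn x P (Q.take j)
  have hij : (Q.take j).take i = Q.take i := by
    rw [List.take_take, min_eq_left (hi.trans (List.length_take_le _ _))]
  rw [hij] at hle
  have hiQ : i ≤ Q.length := hi.trans (List.length_take_le' _ _)
  exact (Finset.inf'_le _ (Finset.mem_range_succ_iff.mpr hiQ)).trans hle

lemma monotone_wedPrefixMin_take (hnn : ∀ a b, 0 ≤ sub a b) (P Q : List α) :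
    Monotone fun k => wedPrefixMin sub (P.take k) Q := by
  refine monotone_nat_of_le_succ fun k => ?_
  rw [List.take_add_one]
  cases P[k]? with
  | none => simp
  | some x =>
      exact Finset.le_inf' _ _ fun j _ => wedPrefixMin_le_wed_append_singleton sub hnn x _ Q j

end

/-- the prefix lower bounds `LB_k = min_{0 ≤ j ≤ |Q|}
wed(P_{1:k}, Q_{1:j})` are monotone nondecreasing in `k` (costs nonnegative). -/
theorem prefix_lower_bound_mono {α : Type*} (sub : Option α → Option α → ℝ)
    (hnn : ∀ a b : Option α, 0 ≤ sub a b)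
    (P Q : List α) (k k' : ℕ) (hkk' : k ≤ k') :
    (Finset.range (Q.length + 1)).inf' ⟨0, by simp⟩
        (fun j => wed sub (P.take k) (Q.take j)) ≤
      (Finset.range (Q.length + 1)).inf' ⟨0, by simp⟩
        (fun j => wed sub (P.take k') (Q.take j)) :=
  monotone_wedPrefixMin_take sub hnn P Q hkk'
end
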